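/- Let σ : ℝ → ℝ and c > 0. Let L̂ : ℝ³ → ℝ (arguments (x,y,t)) be twice continuously differentiable with L̂_y(x,y,t) ≠ 0 everywhere, satisfying the quasilinear equation L̂_t + (σ(x)²/2)·(L̂_{xx} − 2·(L̂_x/L̂_y)·L̂_{xy} + (L̂_x²/L̂_y²)·L̂_{yy}) − (σ(x)²/(2c))·L̂_x²/L̂_y = 0 at every point. Let ŵ : ℝ³ → ℝ be three times continuously differentiable and satisfy ŵ_t + (σ(x)²/2)·ŵ_{xx} = (σ(x)²/(2c))·L̂_x²/L̂_y at every point, and set L̃ := ŵ + c·∂_y ŵ. Then the difference satisfies the linear heat-type equation ∂_t(L̂ − L̃) + (σ(x)²/2)·∂_{xx}(L̂ − L̃) = 0 at every point. (Step 4 of the paper's regularity theorem, showing L̂ − L̃ solves a heat equation with zero terminal data.) -/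

import Mathlib

/-!
Differentiating the equation for `ŵ` in `y` (partial derivatives of the `C³` function `ŵ`
commute) shows that `ŵ_y` solves the backward heat equation with source `∂_y F`, where
`F = (σ²/(2c)) L̂_x²/L̂_y` is the source of the equation for `ŵ`. Hence
`(∂_t + (σ²/2)∂_xx) L̃ = F + c ∂_y F`. By the quotient rule
`c ∂_y F = (σ²/2)(2 (L̂_x/L̂_y) L̂_xy − (L̂_x/L̂_y)² L̂_yy)`, so the quasilinear equation for `L̂`
says exactly that `(∂_t + (σ²/2)∂_xx) L̂ = F + c ∂_y F` as well.
-/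

/-- First partial derivative in the 1st argument of a function of three real variables. -/
noncomputable def p1 (f : ℝ → ℝ → ℝ → ℝ) (x y t : ℝ) : ℝ := deriv (fun a => f a y t) x
/-- First partial derivative in the 2nd argument. -/
noncomputable def p2 (f : ℝ → ℝ → ℝ → ℝ) (x y t : ℝ) : ℝ := deriv (fun b => f x b t) y
/-- First partial derivative in the 3rd argument. -/
noncomputable def p3 (f : ℝ → ℝ → ℝ → ℝ) (x y t : ℝ) : ℝ := deriv (fun s => f x y s) t
/-- Second partial derivative in the 1st argument. -/
noncomputable def p11 (f : ℝ → ℝ → ℝ → ℝ) : ℝ → ℝ → ℝ → ℝ := p1 (p1 f)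
/-- Mixed second partial derivative (first in the 1st, then in the 2nd argument). -/
noncomputable def p12 (f : ℝ → ℝ → ℝ → ℝ) : ℝ → ℝ → ℝ → ℝ := p2 (p1 f)
/-- Second partial derivative in the 2nd argument. -/
noncomputable def p22 (f : ℝ → ℝ → ℝ → ℝ) : ℝ → ℝ → ℝ → ℝ := p2 (p2 f)

theorem fderiv_fderiv_apply_comm {E G : Type*} [NormedAddCommGroup E] [NormedSpace ℝ E]
    [NormedAddCommGroup G] [NormedSpace ℝ G] {F : E → G} (hF : ContDiff ℝ 2 F) (p v w : E) :
    fderiv ℝ (fun q => fderiv ℝ F q v) p w = fderiv ℝ (fun q => fderiv ℝ F q w) p v := by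
  have hF' : Differentiable ℝ (fderiv ℝ F) :=
    (hF.fderiv_right (m := 1) le_rfl).differentiable one_ne_zero
  have key (u : E) :
      fderiv ℝ (fun q => fderiv ℝ F q u) p = (fderiv ℝ (fderiv ℝ F) p).flip u := by
    rw [fderiv_clm_apply (hF' p) (differentiableAt_const u)]
    simp
  simp only [key, ContinuousLinearMap.flip_apply]
  exact (hF.contDiffAt.isSymmSndFDerivAt (by simp)) w v

def uncurry3 (f : ℝ → ℝ → ℝ → ℝ) (p : ℝ × ℝ × ℝ) : ℝ := f p.1 p.2.1 p.2.2

section PartialDerivatives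

variable {f g : ℝ → ℝ → ℝ → ℝ} {x y t : ℝ}

theorem hasDerivAt_fderiv_p1 (hf : DifferentiableAt ℝ (uncurry3 f) (x, y, t)) :
    HasDerivAt (fun a => f a y t) (fderiv ℝ (uncurry3 f) (x, y, t) (1, 0, 0)) x :=
  hf.hasFDerivAt.comp_hasDerivAt (f := fun a => ((a, y, t) : ℝ × ℝ × ℝ)) x
    ((hasDerivAt_id x).prodMk (hasDerivAt_const x (y, t)))

theorem hasDerivAt_fderiv_p2 (hf : DifferentiableAt ℝ (uncurry3 f) (x, y, t)) :
    HasDerivAt (fun b => f x b t) (fderiv ℝ (uncurry3 f) (x, y, t) (0, 1, 0)) y :=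
  hf.hasFDerivAt.comp_hasDerivAt (f := fun b => ((x, b, t) : ℝ × ℝ × ℝ)) y
    ((hasDerivAt_const y x).prodMk ((hasDerivAt_id y).prodMk (hasDerivAt_const y t)))

theorem hasDerivAt_fderiv_p3 (hf : DifferentiableAt ℝ (uncurry3 f) (x, y, t)) :
    HasDerivAt (fun s => f x y s) (fderiv ℝ (uncurry3 f) (x, y, t) (0, 0, 1)) t :=
  hf.hasFDerivAt.comp_hasDerivAt (f := fun s => ((x, y, s) : ℝ × ℝ × ℝ)) t
    ((hasDerivAt_const t x).prodMk ((hasDerivAt_const t y).prodMk (hasDerivAt_id t)))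

theorem p1_eq_fderiv (hf : DifferentiableAt ℝ (uncurry3 f) (x, y, t)) :
    p1 f x y t = fderiv ℝ (uncurry3 f) (x, y, t) (1, 0, 0) :=
  (hasDerivAt_fderiv_p1 hf).deriv

theorem uncurry3_p1_eq_fderiv (hf : Differentiable ℝ (uncurry3 f)) :
    uncurry3 (p1 f) = fun q => fderiv ℝ (uncurry3 f) q (1, 0, 0) :=
  funext fun _ => p1_eq_fderiv (hf _)

theorem p2_eq_fderiv (hf : DifferentiableAt ℝ (uncurry3 f) (x, y, t)) :
    p2 f x y t = fderiv ℝ (uncurry3 f) (x, y, t) (0, 1, 0) :=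
  (hasDerivAt_fderiv_p2 hf).deriv

theorem uncurry3_p2_eq_fderiv (hf : Differentiable ℝ (uncurry3 f)) :
    uncurry3 (p2 f) = fun q => fderiv ℝ (uncurry3 f) q (0, 1, 0) :=
  funext fun _ => p2_eq_fderiv (hf _)

theorem p3_eq_fderiv (hf : DifferentiableAt ℝ (uncurry3 f) (x, y, t)) :
    p3 f x y t = fderiv ℝ (uncurry3 f) (x, y, t) (0, 0, 1) :=
  (hasDerivAt_fderiv_p3 hf).deriv

theorem uncurry3_p3_eq_fderiv (hf : Differentiable ℝ (uncurry3 f)) :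
    uncurry3 (p3 f) = fun q => fderiv ℝ (uncurry3 f) q (0, 0, 1) :=
  funext fun _ => p3_eq_fderiv (hf _)

variable {n : WithTop ℕ∞}

theorem ContDiff.uncurry3_p1 (hf : ContDiff ℝ (n + 1) (uncurry3 f)) :
    ContDiff ℝ n (uncurry3 (p1 f)) := by
  rw [uncurry3_p1_eq_fderiv (hf.differentiable (by simp))]
  exact (hf.fderiv_right le_rfl).clm_apply contDiff_const

theorem ContDiff.uncurry3_p2 (hf : ContDiff ℝ (n + 1) (uncurry3 f)) :
    ContDiff ℝ n (uncurry3 (p2 f)) := by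
  rw [uncurry3_p2_eq_fderiv (hf.differentiable (by simp))]
  exact (hf.fderiv_right le_rfl).clm_apply contDiff_const

theorem ContDiff.uncurry3_p3 (hf : ContDiff ℝ (n + 1) (uncurry3 f)) :
    ContDiff ℝ n (uncurry3 (p3 f)) := by
  rw [uncurry3_p3_eq_fderiv (hf.differentiable (by simp))]
  exact (hf.fderiv_right le_rfl).clm_apply contDiff_const

theorem hasDerivAt_p1 (hf : DifferentiableAt ℝ (uncurry3 f) (x, y, t)) :
    HasDerivAt (fun a => f a y t) (p1 f x y t) x :=
  (hasDerivAt_fderiv_p1 hf).differentiableAt.hasDerivAt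

theorem hasDerivAt_p2 (hf : DifferentiableAt ℝ (uncurry3 f) (x, y, t)) :
    HasDerivAt (fun b => f x b t) (p2 f x y t) y :=
  (hasDerivAt_fderiv_p2 hf).differentiableAt.hasDerivAt

theorem hasDerivAt_p3 (hf : DifferentiableAt ℝ (uncurry3 f) (x, y, t)) :
    HasDerivAt (fun s => f x y s) (p3 f x y t) t :=
  (hasDerivAt_fderiv_p3 hf).differentiableAt.hasDerivAt

theorem p2_p1_comm (hf : ContDiff ℝ 2 (uncurry3 f)) : p2 (p1 f) = p1 (p2 f) := by
  have hd := hf.differentiable two_ne_zero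
  have h1 : ContDiff ℝ 1 (uncurry3 (p1 f)) := hf.uncurry3_p1
  have h2 : ContDiff ℝ 1 (uncurry3 (p2 f)) := hf.uncurry3_p2
  funext x y t
  rw [p2_eq_fderiv (h1.differentiable one_ne_zero _),
    p1_eq_fderiv (h2.differentiable one_ne_zero _),
    uncurry3_p1_eq_fderiv hd, uncurry3_p2_eq_fderiv hd]
  exact fderiv_fderiv_apply_comm hf _ _ _

theorem p2_p3_comm (hf : ContDiff ℝ 2 (uncurry3 f)) : p2 (p3 f) = p3 (p2 f) := by
  have hd := hf.differentiable two_ne_zero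
  have h3 : ContDiff ℝ 1 (uncurry3 (p3 f)) := hf.uncurry3_p3
  have h2 : ContDiff ℝ 1 (uncurry3 (p2 f)) := hf.uncurry3_p2
  funext x y t
  rw [p2_eq_fderiv (h3.differentiable one_ne_zero _),
    p3_eq_fderiv (h2.differentiable one_ne_zero _),
    uncurry3_p3_eq_fderiv hd, uncurry3_p2_eq_fderiv hd]
  exact fderiv_fderiv_apply_comm hf _ _ _

theorem p2_p11_comm (hf : ContDiff ℝ 3 (uncurry3 f)) : p2 (p11 f) = p11 (p2 f) := by
  have hf1 : ContDiff ℝ 2 (uncurry3 (p1 f)) := hf.uncurry3_p1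
  rw [p11, p11, p2_p1_comm hf1, p2_p1_comm (hf.of_le (by norm_num))]

theorem p1_add (hf : Differentiable ℝ (uncurry3 f)) (hg : Differentiable ℝ (uncurry3 g)) :
    p1 (f + g) = p1 f + p1 g := by
  funext x y t
  exact ((hasDerivAt_p1 (hf _)).add (hasDerivAt_p1 (hg _))).deriv

theorem p1_sub (hf : Differentiable ℝ (uncurry3 f)) (hg : Differentiable ℝ (uncurry3 g)) :
    p1 (f - g) = p1 f - p1 g := by
  funext x y t
  exact ((hasDerivAt_p1 (hf _)).sub (hasDerivAt_p1 (hg _))).deriv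

theorem p3_add (hf : Differentiable ℝ (uncurry3 f)) (hg : Differentiable ℝ (uncurry3 g)) :
    p3 (f + g) = p3 f + p3 g := by
  funext x y t
  exact ((hasDerivAt_p3 (hf _)).add (hasDerivAt_p3 (hg _))).deriv

theorem p3_sub (hf : Differentiable ℝ (uncurry3 f)) (hg : Differentiable ℝ (uncurry3 g)) :
    p3 (f - g) = p3 f - p3 g := by
  funext x y t
  exact ((hasDerivAt_p3 (hf _)).sub (hasDerivAt_p3 (hg _))).deriv

theorem p1_smul (c : ℝ) (f : ℝ → ℝ → ℝ → ℝ) : p1 (c • f) = c • p1 f := by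
  funext x y t
  exact deriv_const_mul_field c

theorem p3_smul (c : ℝ) (f : ℝ → ℝ → ℝ → ℝ) : p3 (c • f) = c • p3 f := by
  funext x y t
  exact deriv_const_mul_field c

end PartialDerivatives

noncomputable def heatOp (σ : ℝ → ℝ) (f : ℝ → ℝ → ℝ → ℝ) : ℝ → ℝ → ℝ → ℝ :=
  fun x y t => p3 f x y t + σ x ^ 2 / 2 * p11 f x y t

section HeatOperator

variable {σ : ℝ → ℝ} {f g : ℝ → ℝ → ℝ → ℝ}

theorem heatOp_add (hf : ContDiff ℝ 2 (uncurry3 f)) (hg : ContDiff ℝ 2 (uncurry3 g)) :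
    heatOp σ (f + g) = heatOp σ f + heatOp σ g := by
  have hf1 : ContDiff ℝ 1 (uncurry3 (p1 f)) := hf.uncurry3_p1
  have hg1 : ContDiff ℝ 1 (uncurry3 (p1 g)) := hg.uncurry3_p1
  funext x y t
  simp only [heatOp, p11, p3_add (hf.differentiable two_ne_zero) (hg.differentiable two_ne_zero),
    p1_add (hf.differentiable two_ne_zero) (hg.differentiable two_ne_zero),
    p1_add (hf1.differentiable one_ne_zero) (hg1.differentiable one_ne_zero), Pi.add_apply]
  ring

theorem heatOp_sub (hf : ContDiff ℝ 2 (uncurry3 f)) (hg : ContDiff ℝ 2 (uncurry3 g)) :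
    heatOp σ (f - g) = heatOp σ f - heatOp σ g := by
  have hf1 : ContDiff ℝ 1 (uncurry3 (p1 f)) := hf.uncurry3_p1
  have hg1 : ContDiff ℝ 1 (uncurry3 (p1 g)) := hg.uncurry3_p1
  funext x y t
  simp only [heatOp, p11, p3_sub (hf.differentiable two_ne_zero) (hg.differentiable two_ne_zero),
    p1_sub (hf.differentiable two_ne_zero) (hg.differentiable two_ne_zero),
    p1_sub (hf1.differentiable one_ne_zero) (hg1.differentiable one_ne_zero), Pi.sub_apply]
  ring

theorem heatOp_smul (c : ℝ) (f : ℝ → ℝ → ℝ → ℝ) : heatOp σ (c • f) = c • heatOp σ f := by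
  funext x y t
  simp only [heatOp, p11, p3_smul, p1_smul, Pi.smul_apply, smul_eq_mul]
  ring

theorem p2_heatOp (hf : ContDiff ℝ 3 (uncurry3 f)) : p2 (heatOp σ f) = heatOp σ (p2 f) := by
  have hf3 : ContDiff ℝ 2 (uncurry3 (p3 f)) := hf.uncurry3_p3
  have hf11 : ContDiff ℝ 1 (uncurry3 (p11 f)) := hf.uncurry3_p1.uncurry3_p1
  funext x y t
  rw [heatOp, ← p2_p3_comm (hf.of_le (by norm_num)), ← p2_p11_comm hf]
  exact ((hasDerivAt_p2 (hf3.differentiable two_ne_zero _)).add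
    ((hasDerivAt_p2 (hf11.differentiable one_ne_zero _)).const_mul _)).deriv

end HeatOperator

noncomputable def sourceTerm (σ : ℝ → ℝ) (c : ℝ) (L : ℝ → ℝ → ℝ → ℝ) : ℝ → ℝ → ℝ → ℝ :=
  fun x y t => σ x ^ 2 / (2 * c) * p1 L x y t ^ 2 / p2 L x y t

theorem p2_sourceTerm {σ : ℝ → ℝ} {c : ℝ} {L : ℝ → ℝ → ℝ → ℝ}
    (hL : ContDiff ℝ 2 (uncurry3 L)) {x y t : ℝ} (hLy : p2 L x y t ≠ 0) :
    p2 (sourceTerm σ c L) x y t = σ x ^ 2 / (2 * c) *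
      (2 * p1 L x y t * p12 L x y t * p2 L x y t - p1 L x y t ^ 2 * p22 L x y t)
        / p2 L x y t ^ 2 := by
  have hLx : HasDerivAt (fun b => p1 L x b t) (p12 L x y t) y :=
    hasDerivAt_p2 ((hL.uncurry3_p1 : ContDiff ℝ 1 _).differentiable one_ne_zero _)
  have hLy' : HasDerivAt (fun b => p2 L x b t) (p22 L x y t) y :=
    hasDerivAt_p2 ((hL.uncurry3_p2 : ContDiff ℝ 1 _).differentiable one_ne_zero _)
  have hquot : HasDerivAt (fun b => sourceTerm σ c L x b t) _ y :=
    ((hLx.pow 2).const_mul _).div hLy' hLy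
  rw [p2, hquot.deriv]
  simp only [Pi.pow_apply]
  ring

theorem heatOp_eq_sourceTerm_add_smul_p2 {σ : ℝ → ℝ} {c : ℝ} (hc : c ≠ 0)
    {L : ℝ → ℝ → ℝ → ℝ} (hL : ContDiff ℝ 2 (uncurry3 L)) (hLy : ∀ x y t, p2 L x y t ≠ 0)
    (hPDE : ∀ x y t : ℝ,
      p3 L x y t
        + σ x ^ 2 / 2
          * (p11 L x y t
            - 2 * (p1 L x y t / p2 L x y t) * p12 L x y t
            + (p1 L x y t) ^ 2 / (p2 L x y t) ^ 2 * p22 L x y t)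
        - σ x ^ 2 / (2 * c) * (p1 L x y t) ^ 2 / p2 L x y t = 0) :
    heatOp σ L = sourceTerm σ c L + c • p2 (sourceTerm σ c L) := by
  funext x y t
  have hPDE := hPDE x y t
  have hv := hLy x y t
  simp only [heatOp, Pi.add_apply, Pi.smul_apply, smul_eq_mul, p2_sourceTerm hL hv, sourceTerm]
  field_simp at hPDE ⊢
  linear_combination hPDE

/-- Step 4 of the regularity theorem: if the `C²` function `L̂(x,y,t)` with `L̂_y ≠ 0`
satisfies the quasilinear equation
`L̂_t + (σ²/2)(L̂_{xx} − 2(L̂_x/L̂_y)L̂_{xy} + (L̂_x²/L̂_y²)L̂_{yy}) − (σ²/(2c))L̂_x²/L̂_y = 0`,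
and the `C³` function `ŵ` satisfies `ŵ_t + (σ²/2)ŵ_{xx} = (σ²/(2c))L̂_x²/L̂_y`, then
with `L̃ := ŵ + c·∂_y ŵ` the difference solves the heat-type equation
`∂_t(L̂ − L̃) + (σ²/2)·∂_{xx}(L̂ − L̃) = 0` at every point. -/
theorem stmt_16
    (σ : ℝ → ℝ) (c : ℝ) (hc : 0 < c)
    (Lh : ℝ → ℝ → ℝ → ℝ)
    (hLh : ContDiff ℝ 2 (fun p : ℝ × ℝ × ℝ => Lh p.1 p.2.1 p.2.2))
    (hLy : ∀ x y t : ℝ, p2 Lh x y t ≠ 0)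
    (hPDEL : ∀ x y t : ℝ,
      p3 Lh x y t
        + σ x ^ 2 / 2
          * (p11 Lh x y t
            - 2 * (p1 Lh x y t / p2 Lh x y t) * p12 Lh x y t
            + (p1 Lh x y t) ^ 2 / (p2 Lh x y t) ^ 2 * p22 Lh x y t)
        - σ x ^ 2 / (2 * c) * (p1 Lh x y t) ^ 2 / p2 Lh x y t = 0)
    (wh : ℝ → ℝ → ℝ → ℝ)
    (hwh : ContDiff ℝ 3 (fun p : ℝ × ℝ × ℝ => wh p.1 p.2.1 p.2.2))
    (hPDEw : ∀ x y t : ℝ,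
      p3 wh x y t + σ x ^ 2 / 2 * p11 wh x y t
        = σ x ^ 2 / (2 * c) * (p1 Lh x y t) ^ 2 / p2 Lh x y t)
    (Lt : ℝ → ℝ → ℝ → ℝ)
    (hLtdef : ∀ x y t : ℝ, Lt x y t = wh x y t + c * p2 wh x y t) :
    ∀ x y t : ℝ,
      p3 (fun a b s => Lh a b s - Lt a b s) x y t
        + σ x ^ 2 / 2 * p11 (fun a b s => Lh a b s - Lt a b s) x y t = 0 := by
  have hw : ContDiff ℝ 3 (uncurry3 wh) := hwh
  have hw2 : ContDiff ℝ 2 (uncurry3 wh) := hw.of_le (by norm_num)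
  have hw2y : ContDiff ℝ 2 (uncurry3 (c • p2 wh)) := hw.uncurry3_p2.const_smul c
  have hLt : Lt = wh + c • p2 wh := by
    funext x y t
    exact hLtdef x y t
  have hHw : heatOp σ wh = sourceTerm σ c Lh := by
    funext x y t
    exact hPDEw x y t
  have hHL := heatOp_eq_sourceTerm_add_smul_p2 hc.ne' hLh hLy hPDEL
  have hHLt : heatOp σ Lt = heatOp σ Lh := by
    rw [hLt, heatOp_add hw2 hw2y, heatOp_smul, ← p2_heatOp hwh, hHw, hHL]
  intro x y t
  change heatOp σ (Lh - Lt) x y t = 0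
  rw [heatOp_sub hLh (hLt ▸ hw2.add hw2y), hHLt, sub_self]
  rfl
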